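/- Let $g:[a,b]\to\mathbb{R}$ be left-continuous and nondecreasing with Lebesgue–Stieltjes measure $\mu_g$, and $h\in L^1(\mu_g)$ nonnegative. Define $e_L(t) = \exp\big(\int_{[a,t)}\overline{h}\,d\mu_g\big)$ where $\overline{h}(s) = h(s)$ for $s\notin D_g$ and $\overline{h}(s) = \log(1+h(s)\Delta^+g(s))/\Delta^+g(s)$ for $s\in D_g$. Then for every $t\in D_g$, $e_L(t^+) - e_L(t) = h(t)\,e_L(t)\,\Delta^+ g(t)$. -/

import Mathlib

open Set Filter MeasureTheory
open scoped Classical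

/-- The modified integrand `h̄` for a nondecreasing derivator. -/
noncomputable def hbar (g h : ℝ → ℝ) (t : ℝ) : ℝ :=
  if Function.rightLim g t ≠ g t then
    Real.log (1 + h t * (Function.rightLim g t - g t)) / (Function.rightLim g t - g t)
  else h t

/-!
The primitive `s ↦ ∫_{[a,s)} h̄ dμ` has right limit `∫_{[a,t)} h̄ dμ + μ{t} h̄(t)` at `t`.
Since `μ{t} = Δ⁺g(t)`, the definition of `h̄` makes the jump `μ{t} h̄(t)` equal to
`log (1 + h(t) Δ⁺g(t))`, and exponentiating turns it into the factor `1 + h(t) Δ⁺g(t)`.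
Integrability of `h̄` comes from `0 ≤ h̄ ≤ h` and the fact that `h̄` differs from `h` only on
the countable jump set of `g`.
-/

open Function Topology

theorem Set.Countable.measurable_indicator {α β : Type*} [MeasurableSpace α]
    [MeasurableSingletonClass α] [MeasurableSpace β] [Zero β] {D : Set α} (hD : D.Countable)
    (f : α → β) : Measurable (D.indicator f) := by
  have : Countable D := hD.to_subtype
  refine measurable_of_restrict_of_restrict_compl hD.measurableSet (measurable_of_countable _) ?_
  have hzero : Dᶜ.domRestrict (D.indicator f) = fun _ => 0 := by
    ext ⟨x, hx⟩
    exact indicator_of_notMem hx f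
  rw [hzero]
  exact measurable_const

namespace MonotoneOn

variable {g : ℝ → ℝ} {a b x : ℝ}

theorem tendsto_rightLim_of_mem_Ico (hg : MonotoneOn g (Icc a b)) (hx : x ∈ Ico a b) :
    Tendsto g (𝓝[>] x) (𝓝 (rightLim g x)) := by
  have hab : a ≤ b := hx.1.trans hx.2.le
  set G := IccExtend hab ((Icc a b).domRestrict g)
  have hG : Monotone G := Monotone.IccExtend hab fun u v huv => hg u.2 v.2 huv
  have hgG : g =ᶠ[𝓝[>] x] G := by
    filter_upwards [Ioc_mem_nhdsGT hx.2] with y hy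
    exact (IccExtend_of_mem hab ((Icc a b).domRestrict g) ⟨hx.1.trans hy.1.le, hy.2⟩).symm
  have hlim : Tendsto g (𝓝[>] x) (𝓝 (rightLim G x)) := (hG.tendsto_rightLim x).congr' hgG.symm
  rwa [rightLim_eq_of_tendsto hlim]

theorem le_rightLim_of_mem_Ico (hg : MonotoneOn g (Icc a b)) (hx : x ∈ Ico a b) :
    g x ≤ rightLim g x := by
  refine ge_of_tendsto (hg.tendsto_rightLim_of_mem_Ico hx) ?_
  filter_upwards [Ioc_mem_nhdsGT hx.2] with y hy
  exact hg (Ico_subset_Icc_self hx) ⟨hx.1.trans hy.1.le, hy.2⟩ hy.1.le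

theorem countable_rightLim_ne (hg : MonotoneOn g (Icc a b)) :
    {x ∈ Ico a b | rightLim g x ≠ g x}.Countable := by
  refine hg.countable_not_continuousWithinAt_Ioi.mono ?_
  rintro x ⟨hx, hjump⟩
  refine ⟨Ico_subset_Icc_self hx, fun hcont => hjump ?_⟩
  have hIcc : Icc a b ∈ 𝓝[>] x :=
    mem_of_superset (Ioc_mem_nhdsGT hx.2) fun y hy => ⟨hx.1.trans hy.1.le, hy.2⟩
  rw [inter_comm, continuousWithinAt_inter' hIcc, continuousWithinAt_Ioi_iff_Ici] at hcont
  exact hcont.rightLim_eq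

end MonotoneOn

theorem measure_singleton_eq_ofReal_of_tendsto {μ : Measure ℝ} {g : ℝ → ℝ} {t L : ℝ}
    (hμ : ∀ᶠ v in 𝓝[>] t, μ (Ico t v) = ENNReal.ofReal (g v - g t))
    (hg : Tendsto g (𝓝[>] t) (𝓝 L)) : μ {t} = ENNReal.ofReal (L - g t) := by
  have hinter : ⋂ r > t, Ico t r = {t} := by
    ext x
    simp only [mem_iInter, mem_Ico, mem_singleton_iff]
    refine ⟨fun hx => le_antisymm ?_ (hx (t + 1) (by linarith)).1,
      fun hx r hr => ⟨hx.ge, hx ▸ hr⟩⟩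
    exact le_of_forall_gt fun r hr => (hx r hr).2
  have hfin : ∃ r > t, μ (Ico t r) ≠ ⊤ := by
    obtain ⟨r, hr, hrt⟩ := (hμ.and self_mem_nhdsWithin).exists
    exact ⟨r, hrt, hr ▸ ENNReal.ofReal_ne_top⟩
  have hlim := tendsto_measure_biInter_gt (fun r _ => measurableSet_Ico.nullMeasurableSet)
    (fun i j _ hij => Ico_subset_Ico_right hij) hfin
  rw [hinter] at hlim
  refine tendsto_nhds_unique hlim ?_
  exact ((ENNReal.continuous_ofReal.tendsto _).comp (hg.sub_const (g t))).congr'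
    (hμ.mono fun v hv => hv.symm)

section IntegralRightLimit

variable {E : Type*} [NormedAddCommGroup E] [NormedSpace ℝ E] {μ : Measure ℝ} {f : ℝ → E}

theorem tendsto_setIntegral_Ioo_nhdsGT {t c : ℝ} (hf : IntegrableOn f (Ioo t c) μ)
    (htc : t < c) :
    Tendsto (fun s => ∫ x in Ioo t s, f x ∂μ) (𝓝[>] t) (𝓝 0) := by
  have hvanish : ∀ x, ∀ᶠ s in 𝓝[>] t, x ∉ Ioo t s := by
    intro x
    by_cases hx : t < x
    · filter_upwards [Ioo_mem_nhdsGT hx] with s hs hxs using lt_asymm hxs.2 hs.2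
    · exact Eventually.of_forall fun s hxs => hx hxs.1
  have hdom := tendsto_integral_filter_of_dominated_convergence (μ := μ.restrict (Ioo t c))
    (F := fun s => (Ioo t s).indicator f) (f := 0) (fun x => ‖f x‖)
    (Eventually.of_forall fun s => hf.aestronglyMeasurable.indicator measurableSet_Ioo)
    (Eventually.of_forall fun s => ae_of_all _ fun x => norm_indicator_le_norm_self f x)
    hf.norm (ae_of_all _ fun x => tendsto_const_nhds.congr' ((hvanish x).mono
      fun s hs => (indicator_of_notMem hs f).symm))
  simp only [Pi.zero_apply, integral_zero] at hdom
  refine hdom.congr' ?_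
  filter_upwards [Ioo_mem_nhdsGT htc] with s hs
  rw [integral_indicator measurableSet_Ioo,
    Measure.restrict_restrict_of_subset (Ioo_subset_Ioo_right hs.2.le)]

theorem setIntegral_Ico_eq_Ico_add_singleton_add_Ioo [CompleteSpace E] {a t s : ℝ}
    (hf : IntegrableOn f (Ico a s) μ) (hat : a ≤ t) (hts : t < s) :
    ∫ x in Ico a s, f x ∂μ =
      ∫ x in Ico a t, f x ∂μ + μ.real {t} • f t + ∫ x in Ioo t s, f x ∂μ := by
  have hIco : Ico t s = {t} ∪ Ioo t s := by rw [← insert_eq, Ioo_insert_left hts]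
  have hf_ts : IntegrableOn f ({t} ∪ Ioo t s) μ := hIco ▸ hf.mono_set (Ico_subset_Ico_left hat)
  rw [← Ico_union_Ico_eq_Ico hat hts.le, setIntegral_union Ico_disjoint_Ico_same measurableSet_Ico
      (hf.mono_set (Ico_subset_Ico_right hts.le)) (hf.mono_set (Ico_subset_Ico_left hat)),
    hIco, setIntegral_union (by simp) measurableSet_Ioo hf_ts.left_of_union hf_ts.right_of_union,
    integral_singleton, add_assoc]

theorem tendsto_setIntegral_Ico_nhdsGT [CompleteSpace E] {a b t : ℝ}
    (hf : IntegrableOn f (Ico a b) μ) (ht : t ∈ Ico a b) :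
    Tendsto (fun s => ∫ x in Ico a s, f x ∂μ) (𝓝[>] t)
      (𝓝 (∫ x in Ico a t, f x ∂μ + μ.real {t} • f t)) := by
  have hf_Ioo : IntegrableOn f (Ioo t b) μ := hf.mono_set fun x hx => ⟨ht.1.trans hx.1.le, hx.2⟩
  have hrest := (tendsto_setIntegral_Ioo_nhdsGT hf_Ioo ht.2).const_add
    (∫ x in Ico a t, f x ∂μ + μ.real {t} • f t)
  rw [add_zero] at hrest
  refine hrest.congr' ?_
  filter_upwards [Ioc_mem_nhdsGT ht.2] with s hs
  exact (setIntegral_Ico_eq_Ico_add_singleton_add_Ioo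
    (hf.mono_set (Ico_subset_Ico_right hs.2)) ht.1 hs.1).symm

end IntegralRightLimit

section Hbar

variable {g h : ℝ → ℝ} {x : ℝ}

theorem hbar_of_rightLim_eq (hx : rightLim g x = g x) : hbar g h x = h x := by
  simp [hbar, hx]

theorem hbar_mul_jump (hx : rightLim g x ≠ g x) :
    hbar g h x * (rightLim g x - g x) = Real.log (1 + h x * (rightLim g x - g x)) := by
  rw [hbar, if_pos hx, div_mul_cancel₀ _ (sub_ne_zero.2 hx)]

theorem hbar_nonneg (hh : 0 ≤ h x) (hg : g x ≤ rightLim g x) : 0 ≤ hbar g h x := by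
  by_cases hx : rightLim g x = g x
  · rwa [hbar_of_rightLim_eq hx]
  rw [hbar, if_pos hx]
  have hΔ : 0 ≤ rightLim g x - g x := sub_nonneg.2 hg
  exact div_nonneg (Real.log_nonneg (by nlinarith)) hΔ

theorem hbar_le (hh : 0 ≤ h x) (hg : g x ≤ rightLim g x) : hbar g h x ≤ h x := by
  by_cases hx : rightLim g x = g x
  · rw [hbar_of_rightLim_eq hx]
  have hΔ : 0 < rightLim g x - g x := sub_pos.2 (hg.lt_of_ne' hx)
  rw [hbar, if_pos hx, div_le_iff₀ hΔ]
  linarith [Real.log_le_sub_one_of_pos (x := 1 + h x * (rightLim g x - g x)) (by positivity)]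

theorem integrableOn_hbar {μ : Measure ℝ} {a b : ℝ} (hg : MonotoneOn g (Icc a b))
    (hh : ∀ x ∈ Ico a b, 0 ≤ h x) (hint : IntegrableOn h (Ico a b) μ) :
    IntegrableOn (hbar g h) (Ico a b) μ := by
  set D := {x ∈ Ico a b | rightLim g x ≠ g x}
  have hcorr : EqOn (hbar g h) (h + D.indicator (hbar g h - h)) (Ico a b) := by
    intro x hx
    by_cases hxD : x ∈ D
    · simp [indicator_of_mem hxD]
    · have hjump : rightLim g x = g x := not_not.1 fun hne => hxD ⟨hx, hne⟩
      simp [indicator_of_notMem hxD, hbar_of_rightLim_eq hjump]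
  have hmeas : AEStronglyMeasurable (hbar g h) (μ.restrict (Ico a b)) :=
    (hint.aestronglyMeasurable.add
      (hg.countable_rightLim_ne.measurable_indicator _).aestronglyMeasurable).congr
      ((ae_restrict_iff' measurableSet_Ico).2 (ae_of_all _ fun x hx => (hcorr hx).symm))
  refine Integrable.mono hint hmeas
    ((ae_restrict_iff' measurableSet_Ico).2 (ae_of_all _ fun x hx => ?_))
  have hgx := hg.le_rightLim_of_mem_Ico hx
  rw [Real.norm_of_nonneg (hbar_nonneg (hh x hx) hgx), Real.norm_of_nonneg (hh x hx)]
  exact hbar_le (hh x hx) hgx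

end Hbar

theorem gExp_jump_general (a b : ℝ) (g : ℝ → ℝ)
    (hmono : MonotoneOn g (Icc a b))
    (μ : Measure ℝ)
    (hμ : ∀ u ∈ Icc a b, ∀ v ∈ Icc a b, u ≤ v → μ (Ico u v) = ENNReal.ofReal (g v - g u))
    (h : ℝ → ℝ) (hpos : ∀ s, 0 ≤ h s)
    (hint : IntegrableOn h (Ico a b) μ)
    (t : ℝ) (ht : t ∈ Ico a b) (htD : g t < Function.rightLim g t) :
    Tendsto (fun s => Real.exp (∫ x in Ico a s, hbar g h x ∂μ))
      (nhdsWithin t (Ioc t b))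
      (nhds (Real.exp (∫ x in Ico a t, hbar g h x ∂μ) *
        (1 + h t * (Function.rightLim g t - g t)))) := by
  have hμ_Ico : ∀ᶠ v in 𝓝[>] t, μ (Ico t v) = ENNReal.ofReal (g v - g t) := by
    filter_upwards [Ioc_mem_nhdsGT ht.2] with v hv
    exact hμ t (Ico_subset_Icc_self ht) v ⟨ht.1.trans hv.1.le, hv.2⟩ hv.1.le
  have hatom : μ.real {t} • hbar g h t = Real.log (1 + h t * (rightLim g t - g t)) := by
    rw [measureReal_def, measure_singleton_eq_ofReal_of_tendsto hμ_Ico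
      (hmono.tendsto_rightLim_of_mem_Ico ht), ENNReal.toReal_ofReal (sub_nonneg.2 htD.le),
      smul_eq_mul, mul_comm, hbar_mul_jump htD.ne']
  have hprimitive := tendsto_setIntegral_Ico_nhdsGT
    (integrableOn_hbar hmono (fun x _ => hpos x) hint) ht
  rw [hatom] at hprimitive
  have hfactor : 0 < 1 + h t * (rightLim g t - g t) := by
    nlinarith [hpos t, sub_pos.2 htD]
  have hexp := (Real.continuous_exp.tendsto _).comp hprimitive
  rw [comp_def, Real.exp_add, Real.exp_log hfactor] at hexp
  exact hexp.mono_left (nhdsWithin_mono t Ioc_subset_Ioi_self)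

/-- At every atom `t ∈ D_g`, the exponential `e_L(t) = exp(∫_{[a,t)} h̄ dμ_g)`
satisfies `e_L(t⁺) - e_L(t) = h(t) e_L(t) Δ⁺g(t)`. -/
theorem gExp_jump (a b : ℝ) (hab : a < b) (g : ℝ → ℝ)
    (hmono : MonotoneOn g (Icc a b))
    (hlc : ∀ t ∈ Ioc a b, Tendsto g (nhdsWithin t (Iio t)) (nhds (g t)))
    (μ : Measure ℝ)
    (hμ : ∀ u ∈ Icc a b, ∀ v ∈ Icc a b, u ≤ v → μ (Ico u v) = ENNReal.ofReal (g v - g u))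
    (h : ℝ → ℝ) (hpos : ∀ s, 0 ≤ h s)
    (hint : IntegrableOn h (Ico a b) μ)
    (t : ℝ) (ht : t ∈ Ico a b) (htD : g t < Function.rightLim g t) :
    Tendsto (fun s => Real.exp (∫ x in Ico a s, hbar g h x ∂μ))
      (nhdsWithin t (Ioc t b))
      (nhds (Real.exp (∫ x in Ico a t, hbar g h x ∂μ) *
        (1 + h t * (Function.rightLim g t - g t)))) :=
  gExp_jump_general a b g hmono μ hμ h hpos hint t ht htD
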